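/- Let D = ⟨R, C, ≺⟩ be a defeasible theory and ⟨T, F⟩ the well-founded model of D according to NDL. Then for every β-stable set M of D: T ⊆ M and F ∩ β_D(M) = ∅. -/

import Mathlib

namespace DLWFS

universe u

/-- Ground literals over a type `A` of atoms: atoms and their classical complements. -/
inductive Lit (A : Type u) : Type u where
  | pos : A → Lit A
  | neg : A → Lit A

/-- The classical complement `p̄` of a literal `p`. -/
def Lit.compl {A : Type u} : Lit A → Lit A
  | .pos a => .neg a
  | .neg a => .pos a

/-- The three kinds of rules of a defeasible theory. -/
inductive RuleKind : Type where
  | strict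
  | defeasible
  | defeater
deriving DecidableEq

/-- A rule of a defeasible theory: a kind, a body (a set of literals) and a head literal. -/
structure DRule (A : Type u) where
  kind : RuleKind
  body : Set (Lit A)
  head : Lit A

/-- A defeasible theory `D = ⟨R, C, ≺⟩`. -/
structure DTheory (A : Type u) where
  rules : Set (DRule A)
  conflicts : Set (Set (Lit A))
  prec : DRule A → DRule A → Prop

namespace DTheory

variable {A : Type u}

/-- The strict rules `R_s`. -/
def Rs (D : DTheory A) : Set (DRule A) := {r ∈ D.rules | r.kind = RuleKind.strict}

/-- The defeasible rules `R_d`. -/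
def Rd (D : DTheory A) : Set (DRule A) := {r ∈ D.rules | r.kind = RuleKind.defeasible}

/-- The defeater rules `R_u`. -/
def Ru (D : DTheory A) : Set (DRule A) := {r ∈ D.rules | r.kind = RuleKind.defeater}

/-- `C[p]`: the conflict sets containing literal `p`. -/
def Cset (D : DTheory A) (p : Lit A) : Set (Set (Lit A)) := {c ∈ D.conflicts | p ∈ c}

/-- Structural conditions in the definition of a defeasible theory: a countable set of
rules with finite bodies, a countable set of finite conflict sets containing every
minimal conflict set `{p, ¬p}`, and an acyclic priority relation over non-strict rules. -/
def WellFormed (D : DTheory A) : Prop :=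
  D.rules.Countable ∧ D.conflicts.Countable ∧
  (∀ r ∈ D.rules, r.body.Finite) ∧
  (∀ c ∈ D.conflicts, c.Finite) ∧
  (∀ p : A, ({Lit.pos p, Lit.neg p} : Set (Lit A)) ∈ D.conflicts) ∧
  (∀ r s, D.prec r s → r.kind ≠ RuleKind.strict ∧ s.kind ≠ RuleKind.strict) ∧
  (∀ r, ¬ Relation.TransGen D.prec r r)

/-- `C = C_MIN`: the conflict sets are exactly the minimal ones `{p, ¬p}`. -/
def MinimalConflicts (D : DTheory A) : Prop :=
  D.conflicts = {c | ∃ p : A, c = ({Lit.pos p, Lit.neg p} : Set (Lit A))}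

end DTheory

/-- A 3-valued interpretation: a pair `⟨T, F⟩` of sets. -/
abbrev Interp (L : Type u) : Type u := Set L × Set L

variable {A : Type u}

/-- `S` is ADL-unfounded with respect to theory `D` and interpretation `I = ⟨T, F⟩`. -/
def ADLUnfounded (D : DTheory A) (I : Interp (Lit A)) (S : Set (Lit A)) : Prop :=
  ∀ p ∈ S,
    (∀ r ∈ D.Rs, r.head = p → (r.body ∩ (I.2 ∪ S)).Nonempty) ∧
    (∀ r ∈ D.Rd, r.head = p →
      (r.body ∩ (I.2 ∪ S)).Nonempty ∨
      ∃ c ∈ D.conflicts, p ∈ c ∧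
        ∀ q ∈ c \ {p}, ∃ s ∈ D.rules, s.head = q ∧ s.body ⊆ I.1 ∧
          (D.prec r s ∨ s.kind = RuleKind.strict))

/-- `S` is NDL-unfounded with respect to theory `D` and interpretation `I = ⟨T, F⟩`. -/
def NDLUnfounded (D : DTheory A) (I : Interp (Lit A)) (S : Set (Lit A)) : Prop :=
  ∀ p ∈ S,
    (∀ r ∈ D.Rs, r.head = p → (r.body ∩ (I.2 ∪ S)).Nonempty) ∧
    (∀ r ∈ D.Rd, r.head = p →
      (r.body ∩ (I.2 ∪ S)).Nonempty ∨
      ∃ c ∈ D.conflicts, p ∈ c ∧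
        ∀ q ∈ c \ {p}, ∃ s ∈ D.rules, s.head = q ∧ s.body ⊆ I.1 ∧
          ¬ D.prec s r)

/-- `U_D(I)` for ADL: the union of all ADL-unfounded sets. -/
def UA (D : DTheory A) (I : Interp (Lit A)) : Set (Lit A) :=
  ⋃₀ {S | ADLUnfounded D I S}

/-- `U_D(I)` for NDL: the union of all NDL-unfounded sets. -/
def UN (D : DTheory A) (I : Interp (Lit A)) : Set (Lit A) :=
  ⋃₀ {S | NDLUnfounded D I S}

/-- `T_D(I)`: the literals having a witness of provability with respect to `I = ⟨T, F⟩`. -/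
def TD (D : DTheory A) (I : Interp (Lit A)) : Set (Lit A) :=
  {p | ∃ r ∈ D.rules, r.head = p ∧ r.body ⊆ I.1 ∧
    (r.kind = RuleKind.strict ∨
      (r.kind = RuleKind.defeasible ∧
        ∀ c ∈ D.conflicts, p ∈ c →
          ∃ q ∈ c \ {p}, ∀ s ∈ D.rules, s.head = q →
            (D.prec s r ∨ (s.body ∩ I.2).Nonempty)))}

/-- `W_D` for ADL. -/
def WA (D : DTheory A) (I : Interp (Lit A)) : Interp (Lit A) := (TD D I, UA D I)

/-- `W_D` for NDL. -/
def WN (D : DTheory A) (I : Interp (Lit A)) : Interp (Lit A) := (TD D I, UN D I)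

/-- `I` is the well-founded model for the operator `W`: the least fixpoint of `W`
(componentwise order). -/
def IsWFModel {L : Type u} (W : Interp L → Interp L) (I : Interp L) : Prop :=
  W I = I ∧ ∀ J, W J = J → I.1 ⊆ J.1 ∧ I.2 ⊆ J.2

/-- A rule of a normal logic program: `head ← pos, ∼neg`. -/
structure NRule (A : Type u) where
  head : A
  pos : Set A
  neg : Set A

/-- A normal logic program: a set of rules. -/
abbrev NProgram (A : Type u) : Type u := Set (NRule A)

/-- Structural conditions in the definition of a normal logic program: a countable
set of ground rules with finite bodies. -/
def NProgram.WellFormed (P : NProgram A) : Prop :=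
  P.Countable ∧ ∀ r ∈ P, r.pos.Finite ∧ r.neg.Finite

/-- The immediate consequence operator `T_Π` on 3-valued interpretations. -/
def TP (P : NProgram A) (I : Interp A) : Set A :=
  {a | ∃ r ∈ P, r.head = a ∧ r.pos ⊆ I.1 ∧ r.neg ⊆ I.2}

/-- `S` is an unfounded set of program `P` with respect to interpretation `I = ⟨T, F⟩`. -/
def PUnfounded (P : NProgram A) (I : Interp A) (S : Set A) : Prop :=
  ∀ p ∈ S, ∀ r ∈ P, r.head = p →
    (r.pos ∩ (I.2 ∪ S)).Nonempty ∨ (r.neg ∩ I.1).Nonempty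

/-- `U_Π(I)`: the greatest unfounded set (union of all unfounded sets). -/
def UP (P : NProgram A) (I : Interp A) : Set A :=
  ⋃₀ {S | PUnfounded P I S}

/-- `W_Π(I) = ⟨T_Π(I), U_Π(I)⟩`. -/
def WP (P : NProgram A) (I : Interp A) : Interp A := (TP P I, UP P I)

/-- Transfinite iteration of an operator `W` from `⊥`, taking suprema at limit ordinals. -/
noncomputable def iterW {α : Type*} [CompleteLattice α] (W : α → α) : Ordinal.{0} → α :=
  fun o =>
    Ordinal.limitRecOn (motive := fun _ => α) o ⊥ (fun _ ih => W ih)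
      (fun o' _ ih => ⨆ x : Set.Iio o', ih x.1 x.2)

/-- One step of the immediate consequence operator for a set of defeasible-theory rules. -/
def TRstep (R : Set (DRule A)) (S : Set (Lit A)) : Set (Lit A) :=
  {p | ∃ r ∈ R, r.head = p ∧ r.body ⊆ S}

/-- The finite iterates `T_R ↑ n`. -/
def TRiter (R : Set (DRule A)) : ℕ → Set (Lit A)
  | 0 => ∅
  | n + 1 => TRstep R (TRiter R n)

/-- `Cl(R) = T_R ↑ ω`. -/
def ClR (R : Set (DRule A)) : Set (Lit A) := ⋃ n, TRiter R n

/-- The `α`-reduct `D_α^S` of a defeasible theory. -/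
def alphaReduct (D : DTheory A) (S : Set (Lit A)) : Set (DRule A) :=
  D.Rs ∪ {r ∈ D.Rd | ∀ c ∈ D.conflicts, r.head ∈ c → ∃ q ∈ c \ {r.head}, q ∉ S}

/-- The ambiguity-propagating operator `α_D(S) = Cl(D_α^S)`. -/
def alphaOp (D : DTheory A) (S : Set (Lit A)) : Set (Lit A) := ClR (alphaReduct D S)

/-- The `β`-reduct `D_β^S` of a defeasible theory. -/
def betaReduct (D : DTheory A) (S : Set (Lit A)) : Set (DRule A) :=
  D.Rs ∪ {r ∈ D.Rd | ∀ c ∈ D.conflicts, r.head ∈ c →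
    ∃ q ∈ c \ {r.head}, ∀ s ∈ D.rules, s.head = q → (¬ s.body ⊆ S ∨ D.prec s r)}

/-- The ambiguity-blocking operator `β_D(S) = Cl(D_β^S)`. -/
def betaOp (D : DTheory A) (S : Set (Lit A)) : Set (Lit A) := ClR (betaReduct D S)

/-- `S` is an `α`-stable set of `D`. -/
def AlphaStable (D : DTheory A) (S : Set (Lit A)) : Prop := alphaOp D S = S

/-- `S` is a `β`-stable set of `D`. -/
def BetaStable (D : DTheory A) (S : Set (Lit A)) : Prop := betaOp D S = S

/-- The sequence `X_D↑λ`: `X↑0 = ∅`, `X↑(λ+1) = β_D(β_D(X↑λ))`, unions at limits. -/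
noncomputable def Xseq (D : DTheory A) : Ordinal.{0} → Set (Lit A) :=
  iterW (fun S => betaOp D (betaOp D S))

/-- The Gelfond–Lifschitz reduct `Π^S`. -/
def glReduct (P : NProgram A) (S : Set A) : NProgram A :=
  {r' | ∃ r ∈ P, r.neg ∩ S = ∅ ∧ r' = NRule.mk r.head r.pos ∅}

/-- One step of the immediate consequence operator for a NAF-free program. -/
def TPstep (P : NProgram A) (S : Set A) : Set A :=
  {a | ∃ r ∈ P, r.head = a ∧ r.pos ⊆ S}

/-- The finite iterates `T_Π ↑ n` of a NAF-free program. -/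
def TPiter (P : NProgram A) : ℕ → Set A
  | 0 => ∅
  | n + 1 => TPstep P (TPiter P n)

/-- `Cl(Π) = T_Π ↑ ω`. -/
def ClP (P : NProgram A) : Set A := ⋃ n, TPiter P n

/-- The Gelfond–Lifschitz operator `γ_Π(S) = Cl(Π^S)`. -/
def gamma (P : NProgram A) (S : Set A) : Set A := ClP (glReduct P S)

/-- `S` is a stable model of `P`. -/
def StableModel (P : NProgram A) (S : Set A) : Prop := gamma P S = S

/-- `Prod(C[p])`: all sets obtained by choosing one literal other than `p` from each
conflict set containing `p`. -/
def ProdC (D : DTheory A) (p : Lit A) : Set (Set (Lit A)) :=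
  {Q | ∃ f : Set (Lit A) → Lit A,
    (∀ c ∈ D.conflicts, p ∈ c → f c ∈ c \ {p}) ∧
    Q = f '' {c ∈ D.conflicts | p ∈ c}}

/-- The logic program translation `Π_D` of a defeasible theory `D` (negative literals
are treated as fresh atoms, so the atoms of the program are the literals of `D`). -/
def lpTrans (D : DTheory A) : NProgram (Lit A) :=
  {r' | ∃ r ∈ D.Rs, r' = NRule.mk r.head r.body ∅} ∪
  {r' | ∃ r ∈ D.Rd, ∃ Q ∈ ProdC D r.head, r' = NRule.mk r.head r.body Q}

/-- The explicit version `Φ` of a normal program `Π`: atoms of `Φ` are the literals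
over the atoms of `Π` (`¬p` being a fresh atom). -/
def explicitVer (P : NProgram A) : NProgram (Lit A) :=
  {r' | ∃ r ∈ P, r' = NRule.mk (Lit.pos r.head) (Lit.pos '' r.pos ∪ Lit.neg '' r.neg) ∅} ∪
  {r' | ∃ p : A, r' = NRule.mk (Lit.neg p) ∅ {Lit.pos p}}

/-- The minimal conflict sets over atom type `A`. -/
def CMin (A : Type u) : Set (Set (Lit A)) :=
  {c | ∃ p : A, c = ({Lit.pos p, Lit.neg p} : Set (Lit A))}

/-- The defeasible theory translation `D_Π` of a normal program `Π`: each program rule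
becomes a strict rule (default literals `∼b` becoming negative literals `¬b`), and each
atom `p` yields a presumption `∅ ⇒ ¬p`; conflict sets are minimal and `≺` is empty. -/
def dtTrans (P : NProgram A) : DTheory A :=
  { rules :=
      {e | ∃ r ∈ P, e = DRule.mk RuleKind.strict
            (Lit.pos '' r.pos ∪ Lit.neg '' r.neg) (Lit.pos r.head)} ∪
      {e | ∃ p : A, e = DRule.mk RuleKind.defeasible ∅ (Lit.neg p)}
    conflicts := CMin A
    prec := fun _ _ => False }

/-- `M^¬ = M ∪ {¬p : p ∉ M}`, atoms being identified with positive literals. -/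
def negCompl (M : Set A) : Set (Lit A) :=
  Lit.pos '' M ∪ Lit.neg '' {p | p ∉ M}

end DLWFS

/-!
If `M` is β-stable then the two-valued interpretation `⟨M, Mᶜ⟩` is a fixpoint of `W_D`:
its witnesses of provability are exactly the rules of `D_β^M` firing on `M`, and `Mᶜ` is the
greatest NDL-unfounded set, since a literal of `M = Cl(D_β^M)` is derived by a rule of the
reduct that no unfounded set can block. The well-founded model, being the least fixpoint,
lies below `⟨M, Mᶜ⟩`.
-/

namespace DLWFS

section Closure

variable {A : Type*} {R : Set (DRule A)}

lemma TRstep_mono {S T : Set (Lit A)} (h : S ⊆ T) : TRstep R S ⊆ TRstep R T := by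
  rintro p ⟨r, hr, rfl, hb⟩
  exact ⟨r, hr, rfl, hb.trans h⟩

lemma TRiter_monotone : Monotone (TRiter R) := by
  refine monotone_nat_of_le_succ fun n => ?_
  induction n with
  | zero => exact Set.empty_subset _
  | succ n ih => exact TRstep_mono ih

lemma ClR_subset_of_TRstep_subset {X : Set (Lit A)} (h : TRstep R X ⊆ X) : ClR R ⊆ X := by
  refine Set.iUnion_subset fun n => ?_
  induction n with
  | zero => exact Set.empty_subset _
  | succ n ih => exact (TRstep_mono ih).trans h

lemma ClR_subset_TRstep_ClR : ClR R ⊆ TRstep R (ClR R) := by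
  refine Set.iUnion_subset fun n => ?_
  cases n with
  | zero => exact Set.empty_subset _
  | succ n => exact TRstep_mono (Set.subset_iUnion (TRiter R) n)

/-- Finiteness of bodies makes `T_R` continuous, so `T_R ↑ ω` is already a fixpoint. -/
lemma TRstep_ClR (hfin : ∀ r ∈ R, r.body.Finite) : TRstep R (ClR R) = ClR R := by
  refine subset_antisymm ?_ ClR_subset_TRstep_ClR
  rintro p ⟨r, hr, rfl, hb⟩
  have hb' : ((hfin r hr).toFinset : Set (Lit A)) ⊆ ⋃ n, TRiter R n := by
    rw [Set.Finite.coe_toFinset]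
    exact hb
  obtain ⟨n, hn⟩ := TRiter_monotone.directed_le.exists_mem_subset_of_finset_subset_biUnion hb'
  exact Set.mem_iUnion.2 ⟨n + 1, r, hr, rfl, by simpa using hn⟩

end Closure

section BetaReduct

variable {A : Type*} {D : DTheory A} {M : Set (Lit A)}

lemma betaReduct_subset_rules : betaReduct D M ⊆ D.rules := by
  rintro r (hr | hr)
  exacts [hr.1, hr.1.1]

lemma TD_compl_eq_TRstep_betaReduct : TD D (M, Mᶜ) = TRstep (betaReduct D M) M := by
  ext p
  constructor
  · rintro ⟨r, hr, rfl, hb, hs | ⟨hd, hdef⟩⟩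
    · exact ⟨r, Or.inl ⟨hr, hs⟩, rfl, hb⟩
    · refine ⟨r, Or.inr ⟨⟨hr, hd⟩, fun c hc hpc => ?_⟩, rfl, hb⟩
      obtain ⟨q, hq, hqs⟩ := hdef c hc hpc
      exact ⟨q, hq, fun s hs hsq => (hqs s hs hsq).symm.imp Set.inter_compl_nonempty_iff.1 id⟩
  · rintro ⟨r, ⟨hr, hs⟩ | ⟨⟨hr, hd⟩, hdef⟩, rfl, hb⟩
    · exact ⟨r, hr, rfl, hb, Or.inl hs⟩
    · refine ⟨r, hr, rfl, hb, Or.inr ⟨hd, fun c hc hpc => ?_⟩⟩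
      obtain ⟨q, hq, hqs⟩ := hdef c hc hpc
      exact ⟨q, hq, fun s hs hsq => (hqs s hs hsq).symm.imp id Set.inter_compl_nonempty_iff.2⟩

lemma ndlUnfounded_compl (hM : TRstep (betaReduct D M) M ⊆ M) :
    NDLUnfounded D (M, Mᶜ) Mᶜ := by
  intro p hp
  have hblocked : ∀ r ∈ betaReduct D M, r.head = p → ¬ r.body ⊆ M :=
    fun r hr hh hb => hp (hM ⟨r, hr, hh, hb⟩)
  refine ⟨fun r hr hh => ?_, fun r hr hh => ?_⟩
  · obtain ⟨x, hx, hxM⟩ := Set.not_subset.1 (hblocked r (Or.inl hr) hh)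
    exact ⟨x, hx, Or.inl hxM⟩
  · by_cases hb : r.body ⊆ M
    · subst hh
      have hnot : ¬ ∀ c ∈ D.conflicts, r.head ∈ c → ∃ q ∈ c \ {r.head},
          ∀ s ∈ D.rules, s.head = q → (¬ s.body ⊆ M ∨ D.prec s r) :=
        fun hdef => hblocked r (Or.inr ⟨hr, hdef⟩) rfl hb
      push Not at hnot
      exact Or.inr hnot
    · obtain ⟨x, hx, hxM⟩ := Set.not_subset.1 hb
      exact Or.inl ⟨x, hx, Or.inl hxM⟩

lemma disjoint_of_ndlUnfounded (hM : TRstep (betaReduct D M) M ⊆ M)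
    (hcl : M ⊆ ClR (betaReduct D M)) {S : Set (Lit A)} (hS : NDLUnfounded D (M, Mᶜ) S) :
    Disjoint M S := by
  suffices M ⊆ M \ S from Set.subset_sdiff.1 this |>.2
  refine hcl.trans (ClR_subset_of_TRstep_subset ?_)
  rintro p ⟨r, hr, rfl, hb⟩
  refine ⟨hM ⟨r, hr, rfl, hb.trans Set.sdiff_subset⟩, fun hpS => ?_⟩
  have hsupported : ¬ (r.body ∩ (Mᶜ ∪ S)).Nonempty := by
    rintro ⟨x, hx, hxM | hxS⟩
    exacts [hxM (hb hx).1, (hb hx).2 hxS]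
  obtain ⟨hstrict, hdefeasible⟩ := hS _ hpS
  rcases hr with hrs | ⟨hrd, hblock⟩
  · exact hsupported (hstrict r hrs rfl)
  · rcases hdefeasible r hrd rfl with hne | ⟨c, hc, hpc, hattack⟩
    · exact hsupported hne
    · obtain ⟨q, hq, hqs⟩ := hblock c hc hpc
      obtain ⟨s, hs, hsq, hsb, hsr⟩ := hattack q hq
      exact (hqs s hs hsq).elim (· hsb) hsr

lemma UN_compl_eq_compl (hM : TRstep (betaReduct D M) M ⊆ M)
    (hcl : M ⊆ ClR (betaReduct D M)) : UN D (M, Mᶜ) = Mᶜ :=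
  subset_antisymm
    (Set.sUnion_subset fun _ hS => (disjoint_of_ndlUnfounded hM hcl hS).subset_compl_left)
    (Set.subset_sUnion_of_mem (ndlUnfounded_compl hM))

lemma WN_compl_of_betaStable (hfin : ∀ r ∈ D.rules, r.body.Finite) (hM : BetaStable D M) :
    WN D (M, Mᶜ) = (M, Mᶜ) := by
  have hcl : ClR (betaReduct D M) = M := hM
  have hfix : TRstep (betaReduct D M) M = M := by
    have := TRstep_ClR (R := betaReduct D M) fun r hr => hfin r (betaReduct_subset_rules hr)
    rwa [hcl] at this
  exact Prod.ext (TD_compl_eq_TRstep_betaReduct.trans hfix) (UN_compl_eq_compl hfix.le hcl.ge)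

end BetaReduct

/-- Let `D = ⟨R, C, ≺⟩` be a defeasible theory and `⟨T, F⟩` its well-founded model under
NDL. For every `β`-stable set `M` of `D`: `T ⊆ M` and `F ∩ β_D(M) = ∅`. -/
theorem ndl_wfm_within_beta_stable {A : Type*} (D : DTheory A)
    (hwf : D.WellFormed)
    (I : Interp (Lit A)) (hI : IsWFModel (WN D) I) :
    ∀ M : Set (Lit A), BetaStable D M → I.1 ⊆ M ∧ I.2 ∩ betaOp D M = ∅ := by
  intro M hM
  obtain ⟨hT, hF⟩ := hI.2 _ (WN_compl_of_betaStable hwf.2.2.1 hM)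
  have hβ : betaOp D M = M := hM
  rw [hβ]
  exact ⟨hT, Set.disjoint_iff_inter_eq_empty.1 (Set.subset_compl_iff_disjoint_right.1 hF)⟩

end DLWFS
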